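/- arXiv:1503.05863 — 2 statements merged into one kernel-verified Lean document; each statement's English description precedes it below -/
import Mathlib

section
/- Let n ≥ 1 and let m > n be a real number. Let χ : ℝ^n → ℝ^n be a measurable bijection with measurable inverse which preserves Lebesgue measure. Let K : ℝ^n × ℝ^n → ℂ be measurable and A ≥ 0 be such that |K(w,z)| ≤ A·(1+|w−χ(z)|²)^{−m/2} for all w, z ∈ ℝ^ن. Then there exists a constant C > 0, depending only on m and n (not on χ, K, A), such that for every p ∈ [1,∞] the integral operator T F(w) = ∫_{ℝ^n} K(w,z) F(z) dz satisfies ‖T F‖_{L^p(ℝ^n)} ≤ C·A·‖F‖_{L^p(ℝ^n)} for every F ∈ L^p(ℝ^n). -/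
/-!
Schur test: if the nonnegative kernel `k` has all row integrals `∫ k(w,z) dz` and all column
integrals `∫ k(w,z) dw` bounded by `I`, then Hölder's inequality for the measure `k(w,z) dz`
gives `(∫ k(w,z) h(z) dz)^p ≤ I^(p-1) ∫ k(w,z) h(z)^p dz`, and integrating in `w` with Tonelli
gives `‖∫ k(·,z) h(z) dz‖_p ≤ I ‖h‖_p`. For `k(w,z) = A ⟨w - χ z⟩^(-m)` both integrals equal
`A ∫ ⟨x⟩^(-m) dx` (translation invariance of Lebesgue measure, and `χ` preserves it), which is
finite because `m > n`.
-/

open MeasureTheory Complex Real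
open scoped ENNReal RealInnerProductSpace

noncomputable section

abbrev E (n : ℕ) : Type := EuclideanSpace ℝ (Fin n)

open Function Set

section Schur

variable {α β : Type*} [MeasurableSpace α] [MeasurableSpace β] {μ : Measure α} {ν : Measure β}

theorem lintegral_rpow_le_measure_univ_rpow_mul {p : ℝ} (hp : 1 ≤ p) {f : β → ℝ≥0∞}
    (hf : AEMeasurable f ν) :
    (∫⁻ z, f z ∂ν) ^ p ≤ ν univ ^ (p - 1) * ∫⁻ z, f z ^ p ∂ν := by
  rcases hp.eq_or_lt with rfl | hp
  · simp
  have hpq := Real.HolderConjugate.conjExponent hp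
  have hp0 : 0 < p := hpq.pos
  have holder := ENNReal.lintegral_mul_le_Lp_mul_Lq ν hpq hf (g := fun _ ↦ 1) aemeasurable_const
  simp only [Pi.mul_apply, mul_one, ENNReal.one_rpow, lintegral_const, one_mul] at holder
  calc (∫⁻ z, f z ∂ν) ^ p
      ≤ ((∫⁻ z, f z ^ p ∂ν) ^ (1 / p) * ν univ ^ (1 / p.conjExponent)) ^ p := by gcongr
    _ = ν univ ^ (p - 1) * ∫⁻ z, f z ^ p ∂ν := by
      rw [ENNReal.mul_rpow_of_nonneg _ _ hp0.le, ← ENNReal.rpow_mul, ← ENNReal.rpow_mul,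
        one_div_mul_cancel hp0.ne', ENNReal.rpow_one, mul_comm, one_div_mul_eq_div,
        hpq.div_conj_eq_sub_one]

theorem lintegral_mul_rpow_le {p : ℝ} (hp : 1 ≤ p) {κ f : β → ℝ≥0∞}
    (hκ : AEMeasurable κ ν) (hf : AEMeasurable f ν) :
    (∫⁻ z, κ z * f z ∂ν) ^ p ≤ (∫⁻ z, κ z ∂ν) ^ (p - 1) * ∫⁻ z, κ z * f z ^ p ∂ν := by
  have := lintegral_rpow_le_measure_univ_rpow_mul hp
    (hf.mono' (withDensity_absolutelyContinuous ν κ))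
  rwa [lintegral_withDensity_eq_lintegral_mul₀ hκ hf,
    lintegral_withDensity_eq_lintegral_mul₀ hκ (hf.pow_const p),
    withDensity_apply _ MeasurableSet.univ, Measure.restrict_univ] at this

theorem lintegral_rpow_lintegral_mul_le_of_schur [SFinite μ] [SFinite ν] {k : α → β → ℝ≥0∞}
    (hk : Measurable (uncurry k)) {I : ℝ≥0∞} (hrow : ∀ w, ∫⁻ z, k w z ∂ν ≤ I)
    (hcol : ∀ z, ∫⁻ w, k w z ∂μ ≤ I) {p : ℝ} (hp : 1 ≤ p) {h : β → ℝ≥0∞}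
    (hh : AEMeasurable h ν) :
    ∫⁻ w, (∫⁻ z, k w z * h z ∂ν) ^ p ∂μ ≤ I ^ p * ∫⁻ z, h z ^ p ∂ν := by
  have hp1 : 0 ≤ p - 1 := by linarith
  have hkh : AEMeasurable (uncurry fun w z ↦ k w z * h z ^ p) (μ.prod ν) :=
    hk.aemeasurable.mul (hh.pow_const p).comp_snd
  calc ∫⁻ w, (∫⁻ z, k w z * h z ∂ν) ^ p ∂μ
      ≤ ∫⁻ w, I ^ (p - 1) * ∫⁻ z, k w z * h z ^ p ∂ν ∂μ := by
        gcongr with w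
        refine (lintegral_mul_rpow_le hp hk.of_uncurry_left.aemeasurable hh).trans ?_
        gcongr
        exact hrow w
    _ = I ^ (p - 1) * ∫⁻ z, (∫⁻ w, k w z ∂μ) * h z ^ p ∂ν := by
        rw [lintegral_const_mul'' _ hkh.lintegral_prod_right, lintegral_lintegral_swap hkh]
        simp_rw [lintegral_mul_const'' _ hk.of_uncurry_right.aemeasurable]
    _ ≤ I ^ (p - 1) * ∫⁻ z, I * h z ^ p ∂ν := by
        gcongr with z
        exact hcol z
    _ = I ^ p * ∫⁻ z, h z ^ p ∂ν := by
        rw [lintegral_const_mul'' _ (hh.pow_const p), ← mul_assoc]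
        nth_rw 2 [← ENNReal.rpow_one I]
        rw [← ENNReal.rpow_add_of_nonneg _ _ hp1 zero_le_one, sub_add_cancel]

variable {𝕜 V : Type*} [NormedAddCommGroup 𝕜] [NormedAddCommGroup V] [NormedSpace ℝ V]
  [SMulZeroClass 𝕜 V] [IsBoundedSMul 𝕜 V]

theorem enorm_integral_smul_le_lintegral_mul {K : β → 𝕜} {κ : β → ℝ≥0∞} (hK : ∀ z, ‖K z‖ₑ ≤ κ z)
    (F : β → V) : ‖∫ z, K z • F z ∂ν‖ₑ ≤ ∫⁻ z, κ z * ‖F z‖ₑ ∂ν :=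
  (enorm_integral_le_lintegral_enorm _).trans <| lintegral_mono fun z ↦
    enorm_smul_le.trans (by gcongr; exact hK z)

theorem eLpNorm_top_integral_smul_le {K : α → β → 𝕜} {k : α → β → ℝ≥0∞}
    (hk : ∀ w, AEMeasurable (k w) ν) (hKk : ∀ w z, ‖K w z‖ₑ ≤ k w z) {I : ℝ≥0∞}
    (hrow : ∀ w, ∫⁻ z, k w z ∂ν ≤ I) (F : β → V) :
    eLpNorm (fun w ↦ ∫ z, K w z • F z ∂ν) ∞ μ ≤ I * eLpNorm F ∞ ν := by
  rw [eLpNorm_exponent_top, eLpNorm_exponent_top]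
  refine essSup_le_of_ae_le _ (ae_of_all _ fun w ↦ ?_)
  calc ‖∫ z, K w z • F z ∂ν‖ₑ
      ≤ ∫⁻ z, k w z * ‖F z‖ₑ ∂ν := enorm_integral_smul_le_lintegral_mul (hKk w) F
    _ ≤ ∫⁻ z, k w z * eLpNormEssSup F ν ∂ν := by
        refine lintegral_mono_ae ?_
        filter_upwards [ae_le_eLpNormEssSup (f := F) (μ := ν)] with z hz
        gcongr
    _ = (∫⁻ z, k w z ∂ν) * eLpNormEssSup F ν := lintegral_mul_const'' _ (hk w)
    _ ≤ I * eLpNormEssSup F ν := by gcongr; exact hrow w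

theorem eLpNorm_integral_smul_le_of_schur [SFinite μ] [SFinite ν] {K : α → β → 𝕜}
    {k : α → β → ℝ≥0∞} (hk : Measurable (uncurry k)) (hKk : ∀ w z, ‖K w z‖ₑ ≤ k w z)
    {I : ℝ≥0∞} (hrow : ∀ w, ∫⁻ z, k w z ∂ν ≤ I) (hcol : ∀ z, ∫⁻ w, k w z ∂μ ≤ I)
    {p : ℝ≥0∞} (hp : 1 ≤ p) {F : β → V} (hF : AEStronglyMeasurable F ν) :
    eLpNorm (fun w ↦ ∫ z, K w z • F z ∂ν) p μ ≤ I * eLpNorm F p ν := by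
  rcases eq_or_ne p ∞ with rfl | hp_top
  · exact eLpNorm_top_integral_smul_le (fun w ↦ hk.of_uncurry_left.aemeasurable) hKk hrow F
  have hp0 : p ≠ 0 := (zero_lt_one.trans_le hp).ne'
  set r := p.toReal
  have hr : 1 ≤ r := by simpa using ENNReal.toReal_mono hp_top hp
  have hr0 : 0 < r := zero_lt_one.trans_le hr
  rw [eLpNorm_eq_lintegral_rpow_enorm_toReal hp0 hp_top,
    eLpNorm_eq_lintegral_rpow_enorm_toReal hp0 hp_top]
  calc (∫⁻ w, ‖∫ z, K w z • F z ∂ν‖ₑ ^ r ∂μ) ^ (1 / r)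
      ≤ (∫⁻ w, (∫⁻ z, k w z * ‖F z‖ₑ ∂ν) ^ r ∂μ) ^ (1 / r) := by
        gcongr with w
        exact enorm_integral_smul_le_lintegral_mul (hKk w) F
    _ ≤ (I ^ r * ∫⁻ z, ‖F z‖ₑ ^ r ∂ν) ^ (1 / r) := by
        gcongr
        exact lintegral_rpow_lintegral_mul_le_of_schur hk hrow hcol hr hF.enorm
    _ = I * (∫⁻ z, ‖F z‖ₑ ^ r ∂ν) ^ (1 / r) := by
        rw [ENNReal.mul_rpow_of_nonneg _ _ (by positivity), ← ENNReal.rpow_mul,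
          mul_one_div_cancel hr0.ne', ENNReal.rpow_one]

end Schur

section TranslationKernel

variable {G β : Type*} [MeasurableSpace G] [MeasurableSpace β] [AddGroup G] [MeasurableAdd₂ G]
  [MeasurableNeg G] {μ : Measure G} {ν : Measure β}

theorem MeasureTheory.MeasurePreserving.lintegral_comp_sub_left [μ.IsAddLeftInvariant]
    [μ.IsNegInvariant] {χ : β → G} (hχ : MeasurePreserving χ ν μ) {g : G → ℝ≥0∞}
    (hg : Measurable g) (w : G) :
    ∫⁻ z, g (w - χ z) ∂ν = ∫⁻ x, g x ∂μ := by
  rw [hχ.lintegral_comp (f := fun x ↦ g (w - x)) (by fun_prop), lintegral_sub_left_eq_self]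

variable {𝕜 V : Type*} [NormedAddCommGroup 𝕜] [NormedAddCommGroup V] [NormedSpace ℝ V]
  [SMulZeroClass 𝕜 V] [IsBoundedSMul 𝕜 V]

theorem eLpNorm_integral_smul_le_of_enorm_le_comp_sub [SFinite μ] [SFinite ν]
    [μ.IsAddLeftInvariant] [μ.IsAddRightInvariant] [μ.IsNegInvariant]
    {χ : β → G} (hχ : MeasurePreserving χ ν μ) {g : G → ℝ≥0∞}
    (hg : Measurable g) {K : G → β → 𝕜} (hK : ∀ w z, ‖K w z‖ₑ ≤ g (w - χ z))
    {p : ℝ≥0∞} (hp : 1 ≤ p) {F : β → V} (hF : AEStronglyMeasurable F ν) :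
    eLpNorm (fun w ↦ ∫ z, K w z • F z ∂ν) p μ ≤ (∫⁻ x, g x ∂μ) * eLpNorm F p ν :=
  eLpNorm_integral_smul_le_of_schur (k := fun w z ↦ g (w - χ z))
    (hg.comp (measurable_fst.sub (hχ.measurable.comp measurable_snd))) hK
    (fun w ↦ (hχ.lintegral_comp_sub_left hg w).le)
    (fun z ↦ (lintegral_sub_right_eq_self g (χ z)).le) hp hF

end TranslationKernel

theorem stmt1_general (n : ℕ) (m : ℝ) (hm : (n : ℝ) < m) :
    ∃ C > (0 : ℝ), ∀ (χ χinv : E n → E n),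
      Measurable χ → Measurable χinv →
      Function.LeftInverse χinv χ → Function.RightInverse χinv χ →
      MeasurePreserving χ volume volume →
      ∀ (K : E n → E n → ℂ), Measurable (Function.uncurry K) →
      ∀ A : ℝ, 0 ≤ A →
      (∀ w z : E n, ‖K w z‖ ≤ A * (1 + ‖w - χ z‖ ^ 2) ^ (-(m / 2))) →
      ∀ p : ℝ≥0∞, 1 ≤ p → ∀ F : E n → ℂ, MemLp F p volume →
        eLpNorm (fun w => ∫ z, K w z * F z) p volume ≤
          ENNReal.ofReal (C * A) * eLpNorm F p volume := by
  set φ : E n → ℝ := fun x ↦ (1 + ‖x‖ ^ 2) ^ (-(m / 2))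
  have hφ_int : Integrable φ := by
    simpa [φ, neg_div] using integrable_rpow_neg_one_add_norm_sq (E := E n) (μ := volume)
      (by simpa using hm)
  have hφ_pos : 0 < ∫ x, φ x := by
    have hsupp : support φ = univ :=
      eq_univ_of_forall fun x ↦ (by positivity : 0 < φ x).ne'
    rw [integral_pos_iff_support_of_nonneg (fun x ↦ by positivity) hφ_int, hsupp]
    exact isOpen_univ.measure_pos volume univ_nonempty
  refine ⟨∫ x, φ x, hφ_pos, ?_⟩
  intro χ _ _ _ _ _ hχ K _ A hA hK p hp F hF
  have hKφ : ∀ w z, ‖K w z‖ₑ ≤ ENNReal.ofReal (A * φ (w - χ z)) := fun w z ↦ by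
    rw [← ofReal_norm]
    exact ENNReal.ofReal_le_ofReal (hK w z)
  have hI : ∫⁻ x, ENNReal.ofReal (A * φ x) = ENNReal.ofReal ((∫ x, φ x) * A) := by
    rw [← ofReal_integral_eq_lintegral_ofReal (hφ_int.const_mul A)
      (ae_of_all _ fun x ↦ by positivity), integral_const_mul, mul_comm]
  have hφm : Measurable fun x ↦ ENNReal.ofReal (A * φ x) := by fun_prop
  exact hI ▸ eLpNorm_integral_smul_le_of_enorm_le_comp_sub hχ hφm hKφ hp hF.1

/-- Schur-test boundedness on `L^p(ℝⁿ)`, `1 ≤ p ≤ ∞`, of the integral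
operator with kernel `K` satisfying `|K(w,z)| ≤ A·⟨w - χ z⟩^{-m}`, `m > n`, where `χ`
is a measure preserving measurable bijection with measurable inverse. The constant `C`
depends only on `m` and `n`. -/
theorem stmt1 (n : ℕ) (hn : 1 ≤ n) (m : ℝ) (hm : (n : ℝ) < m) :
    ∃ C > (0 : ℝ), ∀ (χ χinv : E n → E n),
      Measurable χ → Measurable χinv →
      Function.LeftInverse χinv χ → Function.RightInverse χinv χ →
      MeasurePreserving χ volume volume →
      ∀ (K : E n → E n → ℂ), Measurable (Function.uncurry K) →
      ∀ A : ℝ, 0 ≤ A →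
      (∀ w z : E n, ‖K w z‖ ≤ A * (1 + ‖w - χ z‖ ^ 2) ^ (-(m / 2))) →
      ∀ p : ℝ≥0∞, 1 ≤ p → ∀ F : E n → ℂ, MemLp F p volume →
        eLpNorm (fun w => ∫ z, K w z * F z) p volume ≤
          ENNReal.ofReal (C * A) * eLpNorm F p volume :=
  stmt1_general n m hm
end
end

section
/- Let n ≥ 1, m > n a real number, and L > 0. Let χ₁ : ℝ^n → ℝ^n be a Lipschitz bijection with Lipschitz constant L which preserves Lebesgue measure, and let χ₂ : ℝ^n → ℝ^n be any map. Let K₁, K₂ : ℝ^n × ℝ^n → ℂ be measurable with |K₁(w,ζ)| ≤ A·(1+|w−χ₁(ζ)|²)^{−m/2} and |K₂(ζ,z)| ≤ B·(1+|ζ−χ₂(z)|²)^{−m/2} for all points, where A, B ≥ 0. Then there exists a constant C > 0, depending only on m, n and L, such that for all w, z ∈ ℝ^n: ∫_{ℝ^n} |K₁(w,ζ)|·|K₂(ζ,z)| dζ ≤ C·A·B·(1+|w−χ₁(χ₂(z))|²)^{−m/2}. -/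
open MeasureTheory Complex Real
open scoped ENNReal RealInnerProductSpace

noncomputable section

/-! With `⟨x⟩ = (1 + ‖x‖²)^{1/2}`, Peetre's bound `⟨x + y⟩ ≤ 2 max(⟨x⟩, ⟨y⟩)` gives
`⟨x⟩^{-m} ⟨y⟩^{-m} ≤ 2^m ⟨x + y⟩^{-m} (⟨x⟩^{-m} + ⟨y⟩^{-m})`, so the self-convolution of
`⟨·⟩^{-m}` is at most `2^{m+1} ‖⟨·⟩^{-m}‖₁ ⟨·⟩^{-m}`, which is finite because `m > n`.
The Lipschitz bound gives `⟨ζ - χ₂ z⟩^{-m} ≤ L^m ⟨χ₁ ζ - χ₁ (χ₂ z)⟩^{-m}` (for `L ≥ 1`), and since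
`χ₁` preserves Lebesgue measure the substitution `u = χ₁ ζ` turns the composed kernel bound into
that self-convolution. -/

/-- `⟨x⟩^{-m}`. -/
def invBracket {F : Type*} [Norm F] (m : ℝ) (x : F) : ℝ := (1 + ‖x‖ ^ 2) ^ (-(m / 2))

section Pointwise

variable {F G : Type*} [SeminormedAddCommGroup F] [SeminormedAddCommGroup G] {m : ℝ}

theorem invBracket_pos (m : ℝ) (x : F) : 0 < invBracket m x := by
  unfold invBracket; positivity

theorem invBracket_nonneg (m : ℝ) (x : F) : 0 ≤ invBracket m x :=
  (invBracket_pos m x).le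

theorem invBracket_sub_comm (m : ℝ) (x y : F) : invBracket m (x - y) = invBracket m (y - x) := by
  rw [invBracket, invBracket, norm_sub_rev]

@[fun_prop]
theorem continuous_invBracket (m : ℝ) : Continuous (invBracket m : F → ℝ) :=
  Continuous.rpow_const (f := fun x : F => 1 + ‖x‖ ^ 2) (by fun_prop)
    fun _ => Or.inl (by positivity)

theorem invBracket_le_rpow_mul_invBracket (hm : 0 ≤ m) {c : ℝ} (hc : 1 ≤ c) {x : F} {y : G}
    (h : ‖x‖ ≤ c * ‖y‖) : invBracket m y ≤ c ^ m * invBracket m x := by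
  have hc0 : 0 < c := one_pos.trans_le hc
  have hxy : 1 + ‖x‖ ^ 2 ≤ c ^ 2 * (1 + ‖y‖ ^ 2) := by
    nlinarith [norm_nonneg x, mul_le_mul h h (norm_nonneg x) (mul_nonneg hc0.le (norm_nonneg y))]
  have hcm : (c ^ 2) ^ (-(m / 2)) = (c ^ m)⁻¹ := by
    rw [← Real.rpow_natCast, ← Real.rpow_mul hc0.le, Nat.cast_ofNat,
      show (2 : ℝ) * -(m / 2) = -m by ring, Real.rpow_neg hc0.le]
  calc invBracket m y = c ^ m * ((c ^ 2) ^ (-(m / 2)) * invBracket m y) := by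
        rw [hcm, ← mul_assoc, mul_inv_cancel₀ (by positivity), one_mul]
    _ = c ^ m * (c ^ 2 * (1 + ‖y‖ ^ 2)) ^ (-(m / 2)) := by
        rw [invBracket, Real.mul_rpow (by positivity) (by positivity)]
    _ ≤ c ^ m * invBracket m x := by
        gcongr
        exact Real.rpow_le_rpow_of_nonpos (by positivity) hxy (by linarith)

theorem invBracket_mul_invBracket_le (hm : 0 ≤ m) (x y : F) :
    invBracket m x * invBracket m y ≤
      2 ^ m * invBracket m (x + y) * (invBracket m x + invBracket m y) := by
  wlog hyx : ‖y‖ ≤ ‖x‖ generalizing x y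
  · simpa only [mul_comm, add_comm] using this y x (le_of_not_ge hyx)
  have hx : invBracket m x ≤ 2 ^ m * invBracket m (x + y) :=
    invBracket_le_rpow_mul_invBracket hm one_le_two ((norm_add_le x y).trans (by linarith))
  calc invBracket m x * invBracket m y ≤ 2 ^ m * invBracket m (x + y) * invBracket m y :=
        mul_le_mul_of_nonneg_right hx (invBracket_nonneg m y)
    _ ≤ 2 ^ m * invBracket m (x + y) * (invBracket m x + invBracket m y) := by
        have := invBracket_nonneg m x
        have := invBracket_nonneg m (x + y)
        gcongr
        linarith

end Pointwise

section Integral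

variable {F : Type*} [NormedAddCommGroup F] [MeasurableSpace F] [BorelSpace F] {m : ℝ}

theorem lintegral_invBracket_sub_mul_invBracket_sub_le [MeasurableAdd F] (hm : 0 ≤ m)
    (μ : Measure F) [μ.IsAddRightInvariant] (w v : F) :
    ∫⁻ u, ENNReal.ofReal (invBracket m (w - u) * invBracket m (u - v)) ∂μ ≤
      ENNReal.ofReal (2 ^ m * invBracket m (w - v)) *
        (2 * ∫⁻ u, ENNReal.ofReal (invBracket m u) ∂μ) := by
  have hpt : ∀ u, ENNReal.ofReal (invBracket m (w - u) * invBracket m (u - v)) ≤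
      ENNReal.ofReal (2 ^ m * invBracket m (w - v)) *
        (ENNReal.ofReal (invBracket m (u - w)) + ENNReal.ofReal (invBracket m (u - v))) := by
    intro u
    rw [← ENNReal.ofReal_add (invBracket_nonneg _ _) (invBracket_nonneg _ _),
      ← ENNReal.ofReal_mul (mul_nonneg (by positivity) (invBracket_nonneg _ _)),
      invBracket_sub_comm m u w, ← sub_add_sub_cancel w u v]
    exact ENNReal.ofReal_le_ofReal (invBracket_mul_invBracket_le hm _ _)
  calc ∫⁻ u, ENNReal.ofReal (invBracket m (w - u) * invBracket m (u - v)) ∂μ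
      ≤ ∫⁻ u, ENNReal.ofReal (2 ^ m * invBracket m (w - v)) *
          (ENNReal.ofReal (invBracket m (u - w)) + ENNReal.ofReal (invBracket m (u - v))) ∂μ :=
        lintegral_mono hpt
    _ = ENNReal.ofReal (2 ^ m * invBracket m (w - v)) *
          ((∫⁻ u, ENNReal.ofReal (invBracket m (u - w)) ∂μ) +
            ∫⁻ u, ENNReal.ofReal (invBracket m (u - v)) ∂μ) := by
        rw [lintegral_const_mul' _ _ ENNReal.ofReal_ne_top, lintegral_add_left (by fun_prop)]
    _ = _ := by
        rw [lintegral_sub_right_eq_self (fun u => ENNReal.ofReal (invBracket m u)),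
          lintegral_sub_right_eq_self (fun u => ENNReal.ofReal (invBracket m u)), two_mul]

theorem lintegral_invBracket_sub_mul_invBracket_comp_le (hm : 0 ≤ m) {μ : Measure F}
    {χ : F → F} (hχ : MeasurePreserving χ μ μ) {c : ℝ} (hc : 1 ≤ c)
    (hlip : ∀ a b, ‖χ a - χ b‖ ≤ c * ‖a - b‖) (w z : F) :
    ∫⁻ ζ, ENNReal.ofReal (invBracket m (w - χ ζ) * invBracket m (ζ - z)) ∂μ ≤
      ENNReal.ofReal (c ^ m) *
        ∫⁻ u, ENNReal.ofReal (invBracket m (w - u) * invBracket m (u - χ z)) ∂μ := by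
  have hpt : ∀ ζ, ENNReal.ofReal (invBracket m (w - χ ζ) * invBracket m (ζ - z)) ≤
      ENNReal.ofReal (c ^ m) *
        ENNReal.ofReal (invBracket m (w - χ ζ) * invBracket m (χ ζ - χ z)) := by
    intro ζ
    rw [← ENNReal.ofReal_mul (by positivity), mul_left_comm]
    exact ENNReal.ofReal_le_ofReal <| mul_le_mul_of_nonneg_left
      (invBracket_le_rpow_mul_invBracket hm hc (hlip ζ z)) (invBracket_nonneg _ _)
  calc _ ≤ ∫⁻ ζ, ENNReal.ofReal (c ^ m) *
          ENNReal.ofReal (invBracket m (w - χ ζ) * invBracket m (χ ζ - χ z)) ∂μ :=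
        lintegral_mono hpt
    _ = _ := by
        rw [lintegral_const_mul' _ _ ENNReal.ofReal_ne_top,
          hχ.lintegral_comp (f := fun u => ENNReal.ofReal
            (invBracket m (w - u) * invBracket m (u - χ z))) (by fun_prop)]

end Integral

section FiniteDimensional

variable {F : Type*} [NormedAddCommGroup F] [NormedSpace ℝ F] [FiniteDimensional ℝ F]
  [MeasurableSpace F] [BorelSpace F] (μ : Measure F) [μ.IsAddHaarMeasure] {m : ℝ}

theorem integrable_invBracket (hm : (Module.finrank ℝ F : ℝ) < m) :
    Integrable (invBracket m) μ := by
  have h := integrable_rpow_neg_one_add_norm_sq (μ := μ) hm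
  rw [neg_div] at h
  exact h

theorem integral_invBracket_pos (hm : (Module.finrank ℝ F : ℝ) < m) :
    0 < ∫ u, invBracket m u ∂μ :=
  integral_pos_of_integrable_nonneg_nonzero (x := 0) (continuous_invBracket m)
    (integrable_invBracket μ hm) (invBracket_nonneg m) (invBracket_pos m 0).ne'

theorem lintegral_invBracket (hm : (Module.finrank ℝ F : ℝ) < m) :
    ∫⁻ u, ENNReal.ofReal (invBracket m u) ∂μ = ENNReal.ofReal (∫ u, invBracket m u ∂μ) :=
  (ofReal_integral_eq_lintegral_ofReal (integrable_invBracket μ hm)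
    (ae_of_all _ (invBracket_nonneg m))).symm

end FiniteDimensional

theorem stmt3_general (n : ℕ) (m : ℝ) (hm : (n : ℝ) < m) (L : ℝ) :
    ∃ C > (0 : ℝ), ∀ (χ₁ : E n → E n), Function.Bijective χ₁ →
      (∀ a b : E n, ‖χ₁ a - χ₁ b‖ ≤ L * ‖a - b‖) →
      MeasurePreserving χ₁ volume volume →
      ∀ (χ₂ : E n → E n) (K₁ K₂ : E n → E n → ℂ),
        Measurable (Function.uncurry K₁) → Measurable (Function.uncurry K₂) →
      ∀ A B : ℝ, 0 ≤ A → 0 ≤ B →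
      (∀ w ζ : E n, ‖K₁ w ζ‖ ≤ A * (1 + ‖w - χ₁ ζ‖ ^ 2) ^ (-(m / 2))) →
      (∀ ζ z : E n, ‖K₂ ζ z‖ ≤ B * (1 + ‖ζ - χ₂ z‖ ^ 2) ^ (-(m / 2))) →
      ∀ w z : E n,
        ∫⁻ ζ, (‖K₁ w ζ‖₊ : ℝ≥0∞) * (‖K₂ ζ z‖₊ : ℝ≥0∞) ≤
          ENNReal.ofReal (C * A * B * (1 + ‖w - χ₁ (χ₂ z)‖ ^ 2) ^ (-(m / 2))) := by
  have hm0 : 0 ≤ m := (Nat.cast_nonneg n).trans hm.le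
  have hdim : (Module.finrank ℝ (E n) : ℝ) < m := by rwa [finrank_euclideanSpace_fin]
  set c := max 1 L
  set I := ∫ u : E n, invBracket m u
  have hI := integral_invBracket_pos volume hdim
  refine ⟨2 * 2 ^ m * c ^ m * I, by positivity, ?_⟩
  intro χ₁ _ hlip hχ₁ χ₂ K₁ K₂ _ _ A B hA hB hK₁ hK₂ w z
  have hlip' (a b : E n) : ‖χ₁ a - χ₁ b‖ ≤ c * ‖a - b‖ :=
    (hlip a b).trans (by gcongr; exact le_max_right 1 L)
  have hK (ζ : E n) : (‖K₁ w ζ‖₊ : ℝ≥0∞) * ‖K₂ ζ z‖₊ ≤ ENNReal.ofReal (A * B) *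
      ENNReal.ofReal (invBracket m (w - χ₁ ζ) * invBracket m (ζ - χ₂ z)) := by
    rw [← ENNReal.ofReal_mul (by positivity), mul_mul_mul_comm, ← enorm_eq_nnnorm,
      ← enorm_eq_nnnorm, ← ofReal_norm, ← ofReal_norm, ← ENNReal.ofReal_mul (norm_nonneg _)]
    exact ENNReal.ofReal_le_ofReal <|
      mul_le_mul (hK₁ w ζ) (hK₂ ζ z) (norm_nonneg _) (mul_nonneg hA (invBracket_nonneg _ _))
  calc ∫⁻ ζ, (‖K₁ w ζ‖₊ : ℝ≥0∞) * ‖K₂ ζ z‖₊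
      ≤ ∫⁻ ζ, ENNReal.ofReal (A * B) *
          ENNReal.ofReal (invBracket m (w - χ₁ ζ) * invBracket m (ζ - χ₂ z)) := lintegral_mono hK
    _ ≤ ENNReal.ofReal (A * B) * (ENNReal.ofReal (c ^ m) *
          (ENNReal.ofReal (2 ^ m * invBracket m (w - χ₁ (χ₂ z))) * (2 * ENNReal.ofReal I))) := by
        rw [lintegral_const_mul' _ _ ENNReal.ofReal_ne_top, ← lintegral_invBracket volume hdim]
        gcongr
        exact (lintegral_invBracket_sub_mul_invBracket_comp_le hm0 hχ₁ (le_max_left 1 L) hlip' w _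
          ).trans (by gcongr; exact lintegral_invBracket_sub_mul_invBracket_sub_le hm0 _ _ _)
    _ = ENNReal.ofReal (2 * 2 ^ m * c ^ m * I * A * B * invBracket m (w - χ₁ (χ₂ z))) := by
        have h2I : 2 * ENNReal.ofReal I = ENNReal.ofReal (2 * I) := by
          rw [ENNReal.ofReal_mul zero_le_two, ENNReal.ofReal_ofNat]
        rw [h2I, ← ENNReal.ofReal_mul (mul_nonneg (by positivity) (invBracket_nonneg _ _)),
          ← ENNReal.ofReal_mul (by positivity), ← ENNReal.ofReal_mul (by positivity)]
        congr 1
        ring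

/-- the kernel composition estimate underlying the composition theorem for
the classes `FIO(χ)`: if `|K₁(w,ζ)| ≤ A·⟨w - χ₁ ζ⟩^{-m}` and `|K₂(ζ,z)| ≤ B·⟨ζ - χ₂ z⟩^{-m}`
with `m > n`, `χ₁` a measure preserving Lipschitz bijection with constant `L`, then
`∫ |K₁(w,ζ)|·|K₂(ζ,z)| dζ ≤ C·A·B·⟨w - χ₁(χ₂ z)⟩^{-m}`, with `C` depending only on
`m`, `n`, `L`. -/
theorem stmt3 (n : ℕ) (hn : 1 ≤ n) (m : ℝ) (hm : (n : ℝ) < m) (L : ℝ) (hL : 0 < L) :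
    ∃ C > (0 : ℝ), ∀ (χ₁ : E n → E n), Function.Bijective χ₁ →
      (∀ a b : E n, ‖χ₁ a - χ₁ b‖ ≤ L * ‖a - b‖) →
      MeasurePreserving χ₁ volume volume →
      ∀ (χ₂ : E n → E n) (K₁ K₂ : E n → E n → ℂ),
        Measurable (Function.uncurry K₁) → Measurable (Function.uncurry K₂) →
      ∀ A B : ℝ, 0 ≤ A → 0 ≤ B →
      (∀ w ζ : E n, ‖K₁ w ζ‖ ≤ A * (1 + ‖w - χ₁ ζ‖ ^ 2) ^ (-(m / 2))) →
      (∀ ζ z : E n, ‖K₂ ζ z‖ ≤ B * (1 + ‖ζ - χ₂ z‖ ^ 2) ^ (-(m / 2))) →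
      ∀ w z : E n,
        ∫⁻ ζ, (‖K₁ w ζ‖₊ : ℝ≥0∞) * (‖K₂ ζ z‖₊ : ℝ≥0∞) ≤
          ENNReal.ofReal (C * A * B * (1 + ‖w - χ₁ (χ₂ z)‖ ^ 2) ^ (-(m / 2))) :=
  stmt3_general n m hm L
end
end
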